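/- If (ε_k) is any sequence of positive reals decreasing to 0, then ∑_{k=1}^∞ sup_{t>0} |sin(t ε_{k+1})/(t ε_{k+1}) − sin(t ε_k)/(t ε_k)| = ∞. -/

import Mathlib

/-!
Evaluating the supremum at `t = π / ε k`, where the second sinc term vanishes, shows that the
`k`-th supremum is at least `sin (π r) / (π r) ≥ (2 / π) (1 - r)` with `r = ε (k + 1) / ε k`.
Since `1 - ε (k + 1) / ε k ≥ (ε k - ε (k + 1)) / ε M` for `k ≥ M`, every block of the series
`∑ (1 - ε (k + 1) / ε k)` from `M` to `N` is at least `1 - ε N / ε M`, which tends to `1` as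
`N → ∞` because `ε → 0`; so the partial sums are not Cauchy and diverge.
-/

open Filter Finset Real

lemma abs_sin_div_self_le_one (x : ℝ) : |sin x / x| ≤ 1 := by
  rw [abs_div]
  exact div_le_one_of_le₀ abs_sin_le_abs (abs_nonneg x)

lemma two_mul_mul_one_sub_le_sin_pi_mul {r : ℝ} (h0 : 0 ≤ r) (h1 : r ≤ 1) :
    2 * r * (1 - r) ≤ sin (π * r) := by
  have half : ∀ s : ℝ, 0 ≤ s → s ≤ 1 / 2 → 2 * s * (1 - s) ≤ sin (π * s) := by
    intro s hs0 hs1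
    have jordan := mul_le_sin (x := π * s) (by positivity) (by nlinarith [pi_pos])
    rw [← mul_assoc, div_mul_cancel₀ 2 pi_ne_zero] at jordan
    nlinarith
  rcases le_total r (1 / 2) with h | h
  · exact half r h0 h
  · have reflect : sin (π * r) = sin (π * (1 - r)) := by rw [mul_one_sub, sin_pi_sub]
    have := half (1 - r) (by linarith) (by linarith)
    rw [sub_sub_cancel] at this
    linarith

section SincDifference

variable {a b : ℝ}

lemma bddAbove_abs_sin_div_sub_sin_div :
    BddAbove {x : ℝ | ∃ t : ℝ, 0 < t ∧ x = |sin (t * a) / (t * a) - sin (t * b) / (t * b)|} := by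
  refine ⟨2, ?_⟩
  rintro _ ⟨t, -, rfl⟩
  calc |sin (t * a) / (t * a) - sin (t * b) / (t * b)|
      ≤ |sin (t * a) / (t * a)| + |sin (t * b) / (t * b)| := abs_sub _ _
    _ ≤ 2 := by linarith [abs_sin_div_self_le_one (t * a), abs_sin_div_self_le_one (t * b)]

lemma two_div_pi_mul_one_sub_div_le_sSup (ha : 0 < a) (hab : a ≤ b) :
    2 / π * (1 - a / b) ≤
      sSup {x : ℝ | ∃ t : ℝ, 0 < t ∧ x = |sin (t * a) / (t * a) - sin (t * b) / (t * b)|} := by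
  have hb : 0 < b := ha.trans_le hab
  set r := a / b
  have hr0 : 0 < r := div_pos ha hb
  have hr1 : r ≤ 1 := div_le_one_of_le₀ hab hb.le
  refine le_csSup_of_le bddAbove_abs_sin_div_sub_sin_div ⟨π / b, by positivity, rfl⟩ ?_
  have hta : π / b * a = π * r := by rw [div_mul_eq_mul_div, mul_div_assoc]
  have htb : π / b * b = π := div_mul_cancel₀ π hb.ne'
  rw [hta, htb, sin_pi, zero_div, sub_zero, abs_div, abs_of_pos (by positivity : 0 < π * r),
    le_div_iff₀ (by positivity)]
  calc 2 / π * (1 - r) * (π * r) = 2 * r * (1 - r) := by field_simp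
    _ ≤ sin (π * r) := two_mul_mul_one_sub_le_sin_pi_mul hr0.le hr1
    _ ≤ |sin (π * r)| := le_abs_self _

end SincDifference

section RatioSeries

variable {ε : ℕ → ℝ}

lemma one_sub_div_le_sum_Ico_one_sub_div (hpos : ∀ k, 0 < ε k) (hanti : Antitone ε)
    {M N : ℕ} (hMN : M ≤ N) :
    1 - ε N / ε M ≤ ∑ k ∈ Ico M N, (1 - ε (k + 1) / ε k) := by
  have htel : ∑ k ∈ Ico M N, (ε k - ε (k + 1)) = ε M - ε N := by
    have := sum_Ico_sub ε hMN
    rw [sum_sub_distrib] at this ⊢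
    linarith
  calc 1 - ε N / ε M = ∑ k ∈ Ico M N, (ε k - ε (k + 1)) / ε M := by
        rw [← sum_div, htel, sub_div, div_self (hpos M).ne']
    _ ≤ ∑ k ∈ Ico M N, (1 - ε (k + 1) / ε k) := by
        refine sum_le_sum fun k hk => ?_
        rw [one_sub_div (hpos k).ne']
        exact div_le_div_of_nonneg_left (sub_nonneg.2 (hanti k.le_succ)) (hpos k)
          (hanti (mem_Ico.1 hk).1)

lemma tendsto_sum_range_one_sub_div_atTop (hpos : ∀ k, 0 < ε k) (hanti : Antitone ε)
    (hlim : Tendsto ε atTop (nhds 0)) :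
    Tendsto (fun M => ∑ k ∈ range M, (1 - ε (k + 1) / ε k)) atTop atTop := by
  set S := fun M => ∑ k ∈ range M, (1 - ε (k + 1) / ε k)
  have hS : Monotone S := monotone_nat_of_le_succ fun n => by
    simp only [S, sum_range_succ, le_add_iff_nonneg_right, sub_nonneg]
    exact div_le_one_of_le₀ (hanti n.le_succ) (hpos n).le
  refine tendsto_atTop_atTop_of_monotone' hS fun hbdd => ?_
  obtain ⟨M, hM⟩ := Metric.cauchySeq_iff'.1 (tendsto_atTop_ciSup hS hbdd).cauchySeq (1 / 2)
    (by norm_num)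
  obtain ⟨N, hN, hMN⟩ :=
    ((hlim.eventually (gt_mem_nhds (half_pos (hpos M)))).and (eventually_ge_atTop M)).exists
  have hblock : S N - S M = ∑ k ∈ Ico M N, (1 - ε (k + 1) / ε k) :=
    (sum_Ico_eq_sub _ hMN).symm
  have hratio : ε N / ε M < 1 / 2 := by
    rw [div_lt_iff₀ (hpos M)]
    linarith
  have hdist := hM N hMN
  rw [Real.dist_eq, abs_of_nonneg (sub_nonneg.2 (hS hMN)), hblock] at hdist
  linarith [one_sub_div_le_sum_Ico_one_sub_div hpos hanti hMN]

end RatioSeries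

open Filter in
theorem stmt_5 (ε : ℕ → ℝ) (hpos : ∀ k, 0 < ε k)
    (hmono : ∀ k, ε (k + 1) ≤ ε k)
    (hlim : Tendsto ε atTop (nhds 0)) :
    Tendsto (fun M => ∑ k ∈ Finset.range M,
        sSup {x : ℝ | ∃ t : ℝ, 0 < t ∧
          x = |Real.sin (t * ε (k + 1)) / (t * ε (k + 1))
              - Real.sin (t * ε k) / (t * ε k)|})
      atTop atTop := by
  have hanti : Antitone ε := antitone_nat_of_succ_le hmono
  refine tendsto_atTop_mono (fun M => ?_)
    ((tendsto_sum_range_one_sub_div_atTop hpos hanti hlim).const_mul_atTop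
      (by positivity : (0 : ℝ) < 2 / π))
  rw [mul_sum]
  exact sum_le_sum fun k _ => two_div_pi_mul_one_sub_div_le_sSup (hpos (k + 1)) (hmono k)
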